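/- arXiv:math/0605275 — 6 statements merged into one kernel-verified Lean document; each statement's English description precedes it below -/
import Mathlib

section
/- The map j : Hom(A × B, C) → Hom(A, C^B) defined by j(α)(a) = { f : V(B) → V(C) | f(b) ∈ α(a,b) for all b } is a well-defined injective order-preserving map of posets. -/
/-- A graph: a symmetric relation on a vertex set, loops allowed. -/
structure LoopGraph (V : Type) : Type where
  Adj : V → V → Prop
  symm : ∀ u v : V, Adj u v → Adj v u

/-- A graph homomorphism: a vertex map preserving adjacency. -/
def LoopGraph.IsHom {V W : Type} (G : LoopGraph V) (H : LoopGraph W) (f : V → W) : Prop :=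
  ∀ u v : V, G.Adj u v → H.Adj (f u) (f v)

/-- The categorical product of graphs. -/
def LoopGraph.prod {V W : Type} (G : LoopGraph V) (H : LoopGraph W) : LoopGraph (V × W) :=
  ⟨fun p q => G.Adj p.1 q.1 ∧ H.Adj p.2 q.2,
   fun p q h => ⟨G.symm _ _ h.1, H.symm _ _ h.2⟩⟩

/-- The categorical exponential graph `H^G`: vertices are all functions `V(G) → V(H)`. -/
def LoopGraph.exp {V W : Type} (G : LoopGraph V) (H : LoopGraph W) : LoopGraph (V → W) :=
  ⟨fun f f' => ∀ v v' : V, G.Adj v v' → H.Adj (f v) (f' v'),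
   fun f f' h v v' hvv' => H.symm _ _ (h v' v (G.symm _ _ hvv'))⟩

/-- Multihomomorphisms between graphs. -/
def LoopGraph.IsMultiHom {V W : Type} (G : LoopGraph V) (H : LoopGraph W) (η : V → Set W) : Prop :=
  (∀ v, (η v).Nonempty) ∧
    ∀ x y : V, G.Adj x y → ∀ x' ∈ η x, ∀ y' ∈ η y, H.Adj x' y'

/-- The Hom poset, ordered by pointwise containment. -/
def MultiHom {V W : Type} (G : LoopGraph V) (H : LoopGraph W) : Type :=
  {η : V → Set W // LoopGraph.IsMultiHom G H η}

instance {V W : Type} (G : LoopGraph V) (H : LoopGraph W) : PartialOrder (MultiHom G H) :=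
  Subtype.partialOrder _

/-- The reflexive path `Iₙ` on `{0, …, n}`. -/
def pathGraph (n : ℕ) : LoopGraph (Fin (n + 1)) :=
  ⟨fun i j => (i : ℕ) = j ∨ (i : ℕ) + 1 = j ∨ (j : ℕ) + 1 = i,
   fun i j h => by tauto⟩

/-- ×-homotopy of vertex maps. -/
def Homotopic {V W : Type} (G : LoopGraph V) (H : LoopGraph W) (f g : V → W) : Prop :=
  ∃ n : ℕ, 1 ≤ n ∧ ∃ F : V × Fin (n + 1) → W,
    (G.prod (pathGraph n)).IsHom H F ∧
    (∀ v, F (v, 0) = f v) ∧ (∀ v, F (v, Fin.last n) = g v)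

/-- The singleton-valued multihomomorphism associated to a graph homomorphism. -/
def singletonMH {V W : Type} {G : LoopGraph V} {H : LoopGraph W} (f : V → W)
    (hf : G.IsHom H f) : MultiHom G H :=
  ⟨fun v => {f v},
   ⟨fun v => ⟨f v, rfl⟩, fun x y hxy x' hx' y' hy' => by
      simp only [Set.mem_singleton_iff] at hx' hy'
      subst hx'; subst hy'; exact hf _ _ hxy⟩⟩

/-- Disjoint union (coproduct) of graphs. -/
def LoopGraph.coprod {V W : Type} (G : LoopGraph V) (H : LoopGraph W) : LoopGraph (V ⊕ W) :=
  ⟨Sum.LiftRel G.Adj H.Adj,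
   fun u v h => by
    cases h with
    | inl h => exact Sum.LiftRel.inl (G.symm _ _ h)
    | inr h => exact Sum.LiftRel.inr (H.symm _ _ h)⟩

/-- The induced subgraph obtained by deleting the vertex `v`. -/
def LoopGraph.deleteVert {V : Type} (G : LoopGraph V) (v : V) : LoopGraph {x : V // x ≠ v} :=
  ⟨fun a b => G.Adj a.1 b.1, fun a b h => G.symm _ _ h⟩

/-- The cartesian (box) product of graphs. -/
def LoopGraph.box {V W : Type} (G : LoopGraph V) (H : LoopGraph W) : LoopGraph (V × W) :=
  ⟨fun p q => (G.Adj p.1 q.1 ∧ p.2 = q.2) ∨ (p.1 = q.1 ∧ H.Adj p.2 q.2),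
   fun p q h => by
    rcases h with ⟨h1, h2⟩ | ⟨h1, h2⟩
    · exact Or.inl ⟨G.symm _ _ h1, h2.symm⟩
    · exact Or.inr ⟨h1.symm, H.symm _ _ h2⟩⟩

/-- The cartesian exponential graph: vertices are the graph homomorphisms. -/
def LoopGraph.cartExp {V W : Type} (G : LoopGraph V) (H : LoopGraph W) :
    LoopGraph {f : V → W // G.IsHom H f} :=
  ⟨fun f f' => ∀ b, H.Adj (f.1 b) (f'.1 b), fun f f' h b => H.symm _ _ (h b)⟩

/-- A ×-homotopy equivalence of graphs. -/
def HtpyEquiv {V W : Type} (G : LoopGraph V) (H : LoopGraph W) (f : V → W) : Prop :=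
  G.IsHom H f ∧ ∃ g : W → V, H.IsHom G g ∧
    Homotopic G G (g ∘ f) id ∧ Homotopic H H (f ∘ g) id

/-- The one-point looped graph. -/
def oneGraph : LoopGraph Unit := ⟨fun _ _ => True, fun _ _ _ => trivial⟩

/-! `j α a` is the box `∏_b α (a, b)`. Its factors are nonempty, so one box lies in another
exactly when each factor does: `j` is an order embedding. -/

open Set

theorem Set.univ_pi_subset_univ_pi_iff_of_nonempty {ι : Type*} {α : ι → Type*}
    {t₁ t₂ : ∀ i, Set (α i)} (h₁ : ∀ i, (t₁ i).Nonempty) :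
    pi univ t₁ ⊆ pi univ t₂ ↔ ∀ i, t₁ i ⊆ t₂ i := by
  simp only [univ_pi_subset_univ_pi_iff, fun i => (h₁ i).ne_empty, exists_false, or_false]

namespace MultiHom

variable {VA VB VC : Type} {A : LoopGraph VA} {B : LoopGraph VB} {C : LoopGraph VC}

def curry (α : MultiHom (A.prod B) C) : MultiHom A (B.exp C) :=
  ⟨fun a => pi univ fun b => α.1 (a, b),
   fun a => univ_pi_nonempty_iff.2 fun b => α.2.1 (a, b),
   fun _ _ hxy _ hf _ hf' b b' hbb' =>
     α.2.2 _ _ ⟨hxy, hbb'⟩ _ (hf b trivial) _ (hf' b' trivial)⟩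

theorem curry_apply (α : MultiHom (A.prod B) C) (a : VA) :
    (curry α).1 a = {f : VB → VC | ∀ b, f b ∈ α.1 (a, b)} := by
  ext f
  simp [curry]

theorem curry_le_curry_iff {α β : MultiHom (A.prod B) C} : curry α ≤ curry β ↔ α ≤ β := by
  change (∀ a, pi univ _ ⊆ pi univ _) ↔ ∀ p, α.1 p ⊆ β.1 p
  simp only [univ_pi_subset_univ_pi_iff_of_nonempty fun b => α.2.1 _, Prod.forall]

def curryEmbedding : MultiHom (A.prod B) C ↪o MultiHom A (B.exp C) :=
  OrderEmbedding.ofMapLEIff curry fun _ _ => curry_le_curry_iff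

end MultiHom

/-- the map `j : Hom(A × B, C) → Hom(A, C^B)` is a well-defined
injective order-preserving map. -/
theorem stmt_4 {VA VB VC : Type} (A : LoopGraph VA) (B : LoopGraph VB) (C : LoopGraph VC) :
    ∃ j : MultiHom (A.prod B) C → MultiHom A (LoopGraph.exp B C),
      (∀ (α : MultiHom (A.prod B) C) (a : VA),
        (j α).1 a = {f : VB → VC | ∀ b : VB, f b ∈ α.1 (a, b)}) ∧
      Function.Injective j ∧ Monotone j :=
  ⟨MultiHom.curryEmbedding, MultiHom.curry_apply, MultiHom.curryEmbedding.injective,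
    MultiHom.curryEmbedding.monotone⟩
end

section
/- For γ ∈ Hom(T, G × H), define c(γ)(v) = A_v × B_v where A_v ⊆ V(G) and B_v ⊆ V(H) are the projections of γ(v) to each factor. Then c is a closure operator on Hom(T, G × H) (order-preserving, c(γ) ≥ γ, and c∘c = c), and its image equals the image of the inclusion i(α,β)(v) = α(v) × β(v) of Hom(T,G) × Hom(T,H). -/
/-! The closure `c` factors as `c γ = i (π₁ γ, π₂ γ)` through the projections `π₁, π₂` of
`Hom(T, G × H)` onto `Hom(T, G)` and `Hom(T, H)`. Since the sets of a multihomomorphism are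
nonempty, `π₁ (i (α, β)) = α` and `π₂ (i (α, β)) = β`, so `c ∘ i = i`; idempotence of `c` and the
equality of the two images both follow. -/

namespace MultiHom

variable {VT VG VH : Type} {T : LoopGraph VT} {G : LoopGraph VG} {H : LoopGraph VH}

@[ext]
theorem ext {η θ : MultiHom T G} (h : ∀ v, η.1 v = θ.1 v) : η = θ :=
  Subtype.ext (funext h)

def fst (γ : MultiHom T (G.prod H)) : MultiHom T G :=
  ⟨fun v => Prod.fst '' γ.1 v,
   fun v => (γ.2.1 v).image _,
   by
    rintro x y hxy _ ⟨p, hp, rfl⟩ _ ⟨q, hq, rfl⟩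
    exact (γ.2.2 x y hxy p hp q hq).1⟩

def snd (γ : MultiHom T (G.prod H)) : MultiHom T H :=
  ⟨fun v => Prod.snd '' γ.1 v,
   fun v => (γ.2.1 v).image _,
   by
    rintro x y hxy _ ⟨p, hp, rfl⟩ _ ⟨q, hq, rfl⟩
    exact (γ.2.2 x y hxy p hp q hq).2⟩

def prod (α : MultiHom T G) (β : MultiHom T H) : MultiHom T (G.prod H) :=
  ⟨fun v => α.1 v ×ˢ β.1 v,
   fun v => (α.2.1 v).prod (β.2.1 v),
   fun x y hxy _ ⟨ha, hb⟩ _ ⟨ha', hb'⟩ => ⟨α.2.2 x y hxy _ ha _ ha', β.2.2 x y hxy _ hb _ hb'⟩⟩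

def prodClosure (γ : MultiHom T (G.prod H)) : MultiHom T (G.prod H) :=
  prod γ.fst γ.snd

@[simp]
theorem fst_prod (α : MultiHom T G) (β : MultiHom T H) : (prod α β).fst = α :=
  ext fun v => Set.fst_image_prod _ (β.2.1 v)

@[simp]
theorem snd_prod (α : MultiHom T G) (β : MultiHom T H) : (prod α β).snd = β :=
  ext fun v => Set.snd_image_prod (α.2.1 v) _

@[simp]
theorem prodClosure_prod (α : MultiHom T G) (β : MultiHom T H) :
    prodClosure (prod α β) = prod α β := by
  simp only [prodClosure, fst_prod, snd_prod]

theorem monotone_prodClosure : Monotone (prodClosure : MultiHom T (G.prod H) → _) :=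
  fun _ _ hle v => Set.prod_mono (Set.image_mono (hle v)) (Set.image_mono (hle v))

theorem le_prodClosure (γ : MultiHom T (G.prod H)) : γ ≤ prodClosure γ :=
  fun _ => Set.subset_fst_image_prod_snd_image

theorem prodClosure_idem (γ : MultiHom T (G.prod H)) :
    prodClosure (prodClosure γ) = prodClosure γ :=
  prodClosure_prod _ _

theorem range_prodClosure :
    Set.range (prodClosure : MultiHom T (G.prod H) → _) = Set.range (Function.uncurry prod) := by
  apply Set.Subset.antisymm
  · rintro _ ⟨γ, rfl⟩
    exact ⟨(γ.fst, γ.snd), rfl⟩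
  · rintro _ ⟨⟨α, β⟩, rfl⟩
    exact ⟨prod α β, prodClosure_prod α β⟩

end MultiHom

/-- projecting each `γ(v)` to the two factors gives a closure operator on
`Hom(T, G × H)` whose image is the image of the inclusion of `Hom(T,G) × Hom(T,H)`. -/
theorem stmt_8 {VT VG VH : Type} (T : LoopGraph VT) (G : LoopGraph VG) (H : LoopGraph VH) :
    ∃ c : MultiHom T (G.prod H) → MultiHom T (G.prod H),
      (∀ (γ : MultiHom T (G.prod H)) (v : VT),
        (c γ).1 v = (Prod.fst '' γ.1 v) ×ˢ (Prod.snd '' γ.1 v)) ∧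
      Monotone c ∧ (∀ γ, γ ≤ c γ) ∧ (∀ γ, c (c γ) = c γ) ∧
      ∃ i : MultiHom T G × MultiHom T H → MultiHom T (G.prod H),
        (∀ (p : MultiHom T G × MultiHom T H) (v : VT),
          (i p).1 v = (p.1.1 v) ×ˢ (p.2.1 v)) ∧
        Set.range c = Set.range i :=
  ⟨MultiHom.prodClosure, fun _ _ => rfl, MultiHom.monotone_prodClosure,
    MultiHom.le_prodClosure, MultiHom.prodClosure_idem,
    Function.uncurry MultiHom.prod, fun _ _ => rfl, MultiHom.range_prodClosure⟩
end

section
/- Graph homomorphisms f, g : G → H are ×-homotopic (via some G × Iₙ → H) if and only if there exists a graph homomorphism F : Iₙ → H^G from the reflexive path Iₙ to the exponential graph H^G with F(0) = f and F(n) = g. -/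
theorem LoopGraph.isHom_prod_iff_isHom_exp {U V W : Type} (G : LoopGraph V) (K : LoopGraph U)
    (H : LoopGraph W) (F : U → V → W) :
    (G.prod K).IsHom H (fun p => F p.2 p.1) ↔ K.IsHom (G.exp H) F :=
  ⟨fun hF u u' hu v v' hv => hF (v, u) (v', u') ⟨hv, hu⟩, fun hF _ _ h => hF _ _ h.2 _ _ h.1⟩

theorem stmt_11_general {V W : Type} (G : LoopGraph V) (H : LoopGraph W) (f g : V → W) :
    Homotopic G H f g ↔
      ∃ n : ℕ, 1 ≤ n ∧ ∃ F : Fin (n + 1) → (V → W),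
        (pathGraph n).IsHom (LoopGraph.exp G H) F ∧ F 0 = f ∧ F (Fin.last n) = g := by
  constructor
  · rintro ⟨n, hn, F, hF, h0, hl⟩
    exact ⟨n, hn, fun i v => F (v, i), (G.isHom_prod_iff_isHom_exp _ H _).1 hF,
      funext h0, funext hl⟩
  · rintro ⟨n, hn, F, hF, rfl, rfl⟩
    exact ⟨n, hn, fun p => F p.2 p.1, (G.isHom_prod_iff_isHom_exp _ H F).2 hF,
      fun _ => rfl, fun _ => rfl⟩

/-- ×-homotopy via `G × Iₙ → H` is equivalent to a path `Iₙ → H^G`. -/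
theorem stmt_11 {V W : Type} (G : LoopGraph V) (H : LoopGraph W) (f g : V → W)
    (hf : G.IsHom H f) (hg : G.IsHom H g) :
    Homotopic G H f g ↔
      ∃ n : ℕ, 1 ≤ n ∧ ∃ F : Fin (n + 1) → (V → W),
        (pathGraph n).IsHom (LoopGraph.exp G H) F ∧ F 0 = f ∧ F (Fin.last n) = g :=
  stmt_11_general G H f g
end

section
/- If f, g : G → H are graph homomorphisms that are 1-homotopic (i.e., there is a graph homomorphism F : G × I₁ → H with F(·,0)=f, F(·,1)=g), then the function ξ : V(G) → nonempty subsets of V(H) given by ξ(v) = {f(v), g(v)} is an element of the poset Hom(G,H), and f ≤ ξ and g ≤ ξ where f, g are viewed as singleton-valued elements of Hom(G,H). -/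
/-! Every pair of vertices of `I₁` is adjacent (loops included), so a homotopy
`F : G × I₁ → H` sends any edge `x ~ y` of `G` to edges `F (x, i) ~ F (y, j)` for all `i, j`;
hence `v ↦ {F (v, 0), F (v, 1)} = {f v, g v}` is a multihomomorphism. -/

theorem pathGraph_one_adj (i j : Fin 2) : (pathGraph 1).Adj i j := by
  fin_cases i <;> fin_cases j <;> simp [pathGraph]

theorem Set.range_fin_two {α : Type*} (u : Fin 2 → α) : Set.range u = {u 0, u 1} := by
  ext; simp [Fin.exists_fin_two, eq_comm]

theorem LoopGraph.isMultiHom_range_of_isHom_prod {V U W : Type} [Nonempty U]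
    {G : LoopGraph V} {K : LoopGraph U} {H : LoopGraph W} (hK : ∀ i j, K.Adj i j)
    {F : V × U → W} (hF : (G.prod K).IsHom H F) :
    G.IsMultiHom H fun v => Set.range fun i => F (v, i) := by
  refine ⟨fun v => Set.range_nonempty _, ?_⟩
  rintro x y hxy _ ⟨i, rfl⟩ _ ⟨j, rfl⟩
  exact hF (x, i) (y, j) ⟨hxy, hK i j⟩

theorem stmt_12_general {V W : Type} (G : LoopGraph V) (H : LoopGraph W) (f g : V → W)
    (F : V × Fin 2 → W) (hF : (G.prod (pathGraph 1)).IsHom H F)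
    (hF0 : ∀ v, F (v, 0) = f v) (hF1 : ∀ v, F (v, 1) = g v) :
    G.IsMultiHom H (fun v => {f v, g v}) ∧
      (∀ v, ({f v} : Set W) ⊆ {f v, g v}) ∧
      (∀ v, ({g v} : Set W) ⊆ {f v, g v}) := by
  have hξ : (fun v => ({f v, g v} : Set W)) = fun v => Set.range fun i => F (v, i) := by
    funext v
    rw [Set.range_fin_two, hF0, hF1]
  exact ⟨hξ ▸ LoopGraph.isMultiHom_range_of_isHom_prod pathGraph_one_adj hF,
    fun v => Set.singleton_subset_iff.2 (Set.mem_insert _ _), fun v => Set.subset_insert _ _⟩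

/-- a 1-homotopy from `f` to `g` yields the multihomomorphism
`ξ(v) = {f(v), g(v)}`, above both `f` and `g`. -/
theorem stmt_12 {V W : Type} (G : LoopGraph V) (H : LoopGraph W) (f g : V → W)
    (hf : G.IsHom H f) (hg : G.IsHom H g)
    (F : V × Fin 2 → W) (hF : (G.prod (pathGraph 1)).IsHom H F)
    (hF0 : ∀ v, F (v, 0) = f v) (hF1 : ∀ v, F (v, 1) = g v) :
    G.IsMultiHom H (fun v => {f v, g v}) ∧
      (∀ v, ({f v} : Set W) ⊆ {f v, g v}) ∧
      (∀ v, ({g v} : Set W) ⊆ {f v, g v}) :=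
  stmt_12_general G H f g F hF hF0 hF1
end

section
/- If G and H are stiff graphs and f : G → H is a ×-homotopy equivalence (i.e., there is g : H → G with g∘f ×-homotopic to id_G and f∘g ×-homotopic to id_H), then f is a graph isomorphism. -/
/-! A ×-homotopy from `h` to `id` is a walk `h = F₀, F₁, …, Fₙ = id` in the exponential graph
`G^G`. If `F` is adjacent to `id` there, then `N(v) ⊆ N(F v)` for every vertex `v`, so stiffness
forces `F v = v`; walking back along the homotopy gives `h = id`. Hence `g ∘ f = id` and
`f ∘ g = id`, and a homomorphism with a homomorphic inverse is an isomorphism. -/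

namespace LoopGraph

variable {V W : Type}

def IsStiff (G : LoopGraph V) : Prop :=
  ∀ u v : V, u ≠ v → ¬ (∀ w, G.Adj v w → G.Adj u w)

theorem IsStiff.eq_id_of_exp_adj_id {G : LoopGraph V} (hG : G.IsStiff) {h : V → V}
    (hh : (G.exp G).Adj h id) : h = id :=
  funext fun v => by_contra fun hne => hG (h v) v hne fun w hw => hh v w hw

theorem IsHom.exp_adj_slice_succ {G : LoopGraph V} {H : LoopGraph W} {n : ℕ}
    {F : V × Fin (n + 1) → W} (hF : (G.prod (pathGraph n)).IsHom H F) (i : Fin n) :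
    (G.exp H).Adj (fun v => F (v, i.castSucc)) (fun v => F (v, i.succ)) :=
  fun v v' hvv' => hF (v, i.castSucc) (v', i.succ) ⟨hvv', Or.inr (Or.inl rfl)⟩

theorem IsStiff.eq_id_of_homotopic {G : LoopGraph V} (hG : G.IsStiff) {h : V → V}
    (hh : Homotopic G G h id) : h = id := by
  obtain ⟨n, -, F, hF, hF₀, hFₙ⟩ := hh
  have slice_eq_id : ∀ i, (fun v => F (v, i)) = id := by
    refine Fin.reverseInduction (funext hFₙ) fun i hsucc => ?_
    apply hG.eq_id_of_exp_adj_id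
    simpa only [hsucc] using hF.exp_adj_slice_succ i
  rw [← slice_eq_id 0]
  exact funext fun v => (hF₀ v).symm

end LoopGraph

/-- a ×-homotopy equivalence between stiff graphs is an isomorphism. -/
theorem stmt_15 {V W : Type} (G : LoopGraph V) (H : LoopGraph W)
    (hGstiff : ∀ u v : V, u ≠ v → ¬ (∀ w, G.Adj v w → G.Adj u w))
    (hHstiff : ∀ u v : W, u ≠ v → ¬ (∀ w, H.Adj v w → H.Adj u w))
    (f : V → W) (hf : G.IsHom H f)
    (g : W → V) (hg : H.IsHom G g)
    (hgf : Homotopic G G (g ∘ f) id) (hfg : Homotopic H H (f ∘ g) id) :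
    Function.Bijective f ∧ ∀ u v : V, G.Adj u v ↔ H.Adj (f u) (f v) := by
  have hgf_id : g ∘ f = id := LoopGraph.IsStiff.eq_id_of_homotopic hGstiff hgf
  have hfg_id : f ∘ g = id := LoopGraph.IsStiff.eq_id_of_homotopic hHstiff hfg
  refine ⟨Function.bijective_iff_has_inverse.mpr ⟨g, congrFun hgf_id, congrFun hfg_id⟩,
    fun u v => ⟨hf u v, fun huv => ?_⟩⟩
  simpa only [← Function.comp_apply (f := g), hgf_id, id] using hg _ _ huv
end

section
/- A finite graph G with at least one looped vertex such that the poset Hom(G,G) is connected is ×-homotopy equivalent to the one-point looped graph 1: the unique map f : G → 1 has a homotopy inverse g : 1 → G, namely the map sending the point to any looped vertex of G. -/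
theorem Homotopic.refl {V W : Type} {G : LoopGraph V} {H : LoopGraph W} {f : V → W}
    (hf : G.IsHom H f) : Homotopic G H f f :=
  ⟨1, le_rfl, fun p => f p.1, fun _ _ h => hf _ _ h.1, fun _ => rfl, fun _ => rfl⟩

theorem Homotopic.trans_of_exp_adj {V W : Type} {G : LoopGraph V} {H : LoopGraph W}
    {f g h : V → W} (hfg : Homotopic G H f g) (hgh : (G.exp H).Adj g h) (hh : G.IsHom H h) :
    Homotopic G H f h := by
  obtain ⟨n, hn, F, hF, hF0, hFn⟩ := hfg
  refine ⟨n + 1, by omega, fun p => Fin.snoc (α := fun _ => W) (fun i => F (p.1, i)) (h p.1) p.2,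
    ?_, fun x => ?_, fun x => Fin.snoc_last ..⟩
  · rintro ⟨x, i⟩ ⟨y, j⟩ ⟨hxy, hij⟩
    induction i using Fin.lastCases with
    | last =>
      induction j using Fin.lastCases with
      | last => simpa only [Fin.snoc_last] using hh x y hxy
      | cast j =>
        obtain rfl : j = Fin.last n := Fin.ext (by
          have := j.isLt; simp only [pathGraph, Fin.val_castSucc, Fin.val_last] at hij ⊢; omega)
        simpa only [Fin.snoc_last, Fin.snoc_castSucc, hFn] using
          H.symm _ _ (hgh y x (G.symm _ _ hxy))
    | cast i =>
      induction j using Fin.lastCases with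
      | last =>
        obtain rfl : i = Fin.last n := Fin.ext (by
          have := i.isLt; simp only [pathGraph, Fin.val_castSucc, Fin.val_last] at hij ⊢; omega)
        simpa only [Fin.snoc_last, Fin.snoc_castSucc, hFn] using hgh x y hxy
      | cast j => simpa only [Fin.snoc_castSucc] using hF (x, i) (y, j) ⟨hxy, hij⟩
  · simpa only [← Fin.castSucc_zero, Fin.snoc_castSucc] using hF0 x

theorem MultiHom.exp_adj_of_mem {V W : Type} {G : LoopGraph V} {H : LoopGraph W}
    (η : MultiHom G H) {f g : V → W} (hf : ∀ x, f x ∈ η.1 x) (hg : ∀ x, g x ∈ η.1 x) :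
    (G.exp H).Adj f g :=
  fun x y hxy => η.2.2 x y hxy _ (hf x) _ (hg y)

theorem homotopic_of_reflTransGen {V W : Type} {G : LoopGraph V} {H : LoopGraph W}
    {η η' : MultiHom G H}
    (hc : Relation.ReflTransGen (fun x y : MultiHom G H => x ≤ y ∨ y ≤ x) η η')
    {f g : V → W} (hf : ∀ x, f x ∈ η.1 x) (hg : ∀ x, g x ∈ η'.1 x) :
    Homotopic G H f g := by
  induction hc generalizing g with
  | refl =>
    exact (Homotopic.refl (η.exp_adj_of_mem hf hf)).trans_of_exp_adj
      (η.exp_adj_of_mem hf hg) (η.exp_adj_of_mem hg hg)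
  | @tail ζ ζ' _ hζ ih =>
    choose s hs using ζ.2.1
    refine (ih hs).trans_of_exp_adj ?_ (ζ'.exp_adj_of_mem hg hg)
    rcases hζ with hle | hle
    · exact ζ'.exp_adj_of_mem (fun x => hle x (hs x)) hg
    · exact ζ.exp_adj_of_mem hs (fun x => hle x (hg x))

theorem stmt_18_general {V : Type} (G : LoopGraph V)
    (hconn : ∀ a b : MultiHom G G,
      Relation.ReflTransGen (fun x y : MultiHom G G => x ≤ y ∨ y ≤ x) a b)
    (v : V) (hv : G.Adj v v) :
    G.IsHom oneGraph (fun _ => ()) ∧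
    oneGraph.IsHom G (fun _ => v) ∧
    Homotopic oneGraph oneGraph ((fun _ : V => ()) ∘ (fun _ : Unit => v)) id ∧
    Homotopic G G ((fun _ : Unit => v) ∘ (fun _ : V => ())) id := by
  have hconst : G.IsHom G (fun _ => v) := fun _ _ _ => hv
  have hid : G.IsHom G id := fun _ _ h => h
  refine ⟨fun _ _ _ => trivial, fun _ _ _ => hv, Homotopic.refl fun _ _ h => h, ?_⟩
  exact homotopic_of_reflTransGen (hconn (singletonMH _ hconst) (singletonMH _ hid))
    (fun _ => rfl) (fun _ => rfl)

/-- a finite graph with a looped vertex and connected `Hom(G,G)` is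
×-homotopy equivalent to the one-point looped graph, via any looped vertex. -/
theorem stmt_18 {V : Type} [Fintype V] (G : LoopGraph V)
    (hconn : ∀ a b : MultiHom G G,
      Relation.ReflTransGen (fun x y : MultiHom G G => x ≤ y ∨ y ≤ x) a b)
    (v : V) (hv : G.Adj v v) :
    G.IsHom oneGraph (fun _ => ()) ∧
    oneGraph.IsHom G (fun _ => v) ∧
    Homotopic oneGraph oneGraph ((fun _ : V => ()) ∘ (fun _ : Unit => v)) id ∧
    Homotopic G G ((fun _ : Unit => v) ∘ (fun _ : V => ())) id :=
  stmt_18_general G hconn v hv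
end
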